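/- For the Riemann-Gaussian log-density log p_σ(X̃|X) = −‖ỸᵀỸ − YᵀY‖_F²/(4σ²) + C (with Ỹ, Y the centered coordinate matrices and C independent of X̃), the gradient with respect to X̃ equals −(1/σ²)·[(ỸỸᵀ)Ỹ − (ỸYᵀ)Y]. -/

import Mathlib

/-!
Centering is linear, so moving `X̃` along the elementary matrix `E = single i j 1` moves the
centered matrix along the line `Y + s • F` with `F = center E`, and the Gram difference along
`(Y + s • F)ᵀ (Y + s • F) - XcᵀXc`. The derivative of its squared Frobenius norm at `s = 0` is
the Frobenius pairing `2 ⟪S, FᵀY + YᵀF⟫ = 4 ⟪F, Y S⟫` for the symmetric `S = YᵀY - XcᵀXc`.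
The rows of `Y S` sum to zero, so pairing it with `F = center E` is the same as pairing it with
`E`, which reads off the entry `(Y S) i j`.
-/

open Matrix BigOperators

/-- Column mean of a coordinate matrix. -/
noncomputable def colMean {N : ℕ} (X : Matrix (Fin 3) (Fin N) ℝ) (i : Fin 3) : ℝ :=
  (∑ j, X i j) / N

/-- Center a coordinate matrix by subtracting the column mean from every column. -/
noncomputable def center {N : ℕ} (X : Matrix (Fin 3) (Fin N) ℝ) : Matrix (Fin 3) (Fin N) ℝ :=
  Matrix.of fun i j => X i j - colMean X i

/-- Translation of every column by a vector `t`, i.e. `X + t·1ᵀ`. -/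
def transl {N : ℕ} (t : Fin 3 → ℝ) (X : Matrix (Fin 3) (Fin N) ℝ) : Matrix (Fin 3) (Fin N) ℝ :=
  Matrix.of fun i j => X i j + t i

/-- Frobenius norm of a real matrix. -/
noncomputable def frob {m n : ℕ} (M : Matrix (Fin m) (Fin n) ℝ) : ℝ :=
  Real.sqrt (∑ i, ∑ j, (M i j) ^ 2)

/-- The gradient of a scalar function of a matrix, as the matrix of partial derivatives. -/
noncomputable def matGrad {N : ℕ} (f : Matrix (Fin 3) (Fin N) ℝ → ℝ)
    (X : Matrix (Fin 3) (Fin N) ℝ) : Matrix (Fin 3) (Fin N) ℝ :=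
  Matrix.of fun i j => deriv (fun s : ℝ => f (X + s • Matrix.single i j 1)) 0

attribute [local instance] Matrix.frobeniusNormedAddCommGroup Matrix.frobeniusNormedSpace

lemma frob_sq_eq_sum {m n : ℕ} (M : Matrix (Fin m) (Fin n) ℝ) :
    frob M ^ 2 = ∑ a, ∑ b, M a b ^ 2 :=
  Real.sq_sqrt (by positivity)

lemma trace_transpose_mul_eq_sum {m n R : Type*} [Fintype m] [Fintype n] [Semiring R]
    (P Q : Matrix m n R) :
    trace (Pᵀ * Q) = ∑ a, ∑ b, P a b * Q a b := by
  rw [trace, Finset.sum_comm]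
  simp [mul_apply]

lemma hasDerivAt_frob_sq {m n : ℕ} {M : ℝ → Matrix (Fin m) (Fin n) ℝ}
    {M' : Matrix (Fin m) (Fin n) ℝ} {t : ℝ}
    (hM : ∀ a b, HasDerivAt (fun s => M s a b) (M' a b) t) :
    HasDerivAt (fun s => frob (M s) ^ 2) (2 * trace ((M t)ᵀ * M')) t := by
  simp only [frob_sq_eq_sum, trace_transpose_mul_eq_sum, Finset.mul_sum]
  refine HasDerivAt.fun_sum fun a _ => HasDerivAt.fun_sum fun b _ => ?_
  refine ((hM a b).fun_pow 2).congr_deriv ?_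
  push_cast
  ring

lemma hasDerivAt_transpose_mul_self_add_smul {m n : Type*} [Fintype m]
    (Y F : Matrix m n ℝ) (a b : n) :
    HasDerivAt (fun s : ℝ => ((Y + s • F)ᵀ * (Y + s • F)) a b) ((Fᵀ * Y + Yᵀ * F) a b) 0 := by
  have hpoly : (fun s : ℝ => ((Y + s • F)ᵀ * (Y + s • F)) a b) =
      fun s => (Yᵀ * Y) a b + s * (Fᵀ * Y + Yᵀ * F) a b + s ^ 2 * (Fᵀ * F) a b := by
    funext s
    simp only [transpose_add, transpose_smul, Matrix.add_mul, Matrix.mul_add, Matrix.smul_mul,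
      Matrix.mul_smul, Matrix.add_apply, Matrix.smul_apply, smul_eq_mul]
    ring
  rw [hpoly]
  refine ((((hasDerivAt_id (0 : ℝ)).mul_const _).const_add _).add
    (((hasDerivAt_id (0 : ℝ)).pow 2).mul_const ((Fᵀ * F) a b))).congr_deriv ?_
  simp

lemma center_add_smul {N : ℕ} (X E : Matrix (Fin 3) (Fin N) ℝ) (s : ℝ) :
    center (X + s • E) = center X + s • center E := by
  ext i j
  simp only [center, colMean, of_apply, Matrix.add_apply, Matrix.smul_apply, smul_eq_mul,
    Finset.sum_add_distrib, ← Finset.mul_sum]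
  ring

lemma mulVec_one_apply {m n R : Type*} [Fintype n] [NonAssocSemiring R] (M : Matrix m n R) (i : m) :
    (M *ᵥ 1) i = ∑ j, M i j := by
  simp [mulVec, dotProduct]

lemma center_mulVec_one {N : ℕ} (X : Matrix (Fin 3) (Fin N) ℝ) : center X *ᵥ 1 = 0 := by
  ext i
  rcases Nat.eq_zero_or_pos N with rfl | hN
  · simp
  · simp only [mulVec_one_apply, center, colMean, of_apply, Finset.sum_sub_distrib,
      Finset.sum_const, Finset.card_univ, Fintype.card_fin, nsmul_eq_mul, Pi.zero_apply]
    field_simp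
    ring

lemma trace_transpose_center_mul {N : ℕ} (E M : Matrix (Fin 3) (Fin N) ℝ) (hM : M *ᵥ 1 = 0) :
    trace ((center E)ᵀ * M) = trace (Eᵀ * M) := by
  have hrow (i : Fin 3) : ∑ j, M i j = 0 := by rw [← mulVec_one_apply, hM, Pi.zero_apply]
  simp only [trace_transpose_mul_eq_sum, center, of_apply, sub_mul, Finset.sum_sub_distrib,
    ← Finset.mul_sum, hrow, mul_zero, sub_zero]

lemma trace_transpose_mul_add_of_symm {m n R : Type*} [Fintype m] [Fintype n] [CommRing R]
    {S : Matrix n n R} (hS : Sᵀ = S) (Y F : Matrix m n R) :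
    trace (Sᵀ * (Fᵀ * Y + Yᵀ * F)) = 2 * trace (Fᵀ * (Y * S)) := by
  have hswap : trace (S * (Yᵀ * F)) = trace (S * (Fᵀ * Y)) := by
    rw [← trace_transpose, transpose_mul, transpose_mul, transpose_transpose, hS, trace_mul_comm]
  rw [hS, Matrix.mul_add, trace_add, hswap, trace_mul_comm S, Matrix.mul_assoc]
  ring

theorem stmt6_general {N : ℕ} (σ : ℝ) (C : ℝ) (Xt X : Matrix (Fin 3) (Fin N) ℝ) :
    matGrad (fun Z => -(frob ((center Z)ᵀ * center Z - (center X)ᵀ * center X)) ^ 2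
        / (4 * σ ^ 2) + C) Xt =
      -(1 / σ ^ 2) • ((center Xt * (center Xt)ᵀ) * center Xt
        - (center Xt * (center X)ᵀ) * center X) := by
  ext i j
  set Y := center Xt
  set F := center (single i j (1 : ℝ))
  set S := Yᵀ * Y - (center X)ᵀ * center X
  have hS : Sᵀ = S := by simp [S, transpose_sub, transpose_mul]
  have hYS : (Y * S) *ᵥ 1 = 0 := by
    simp only [S, Matrix.mul_sub, sub_mulVec, ← mulVec_mulVec, center_mulVec_one, Y, mulVec_zero,
      sub_zero]
  have hcurve (a b : Fin N) : HasDerivAt (fun s : ℝ => ((center (Xt + s • single i j 1))ᵀ *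
      center (Xt + s • single i j 1) - (center X)ᵀ * center X : Matrix (Fin N) (Fin N) ℝ) a b)
      ((Fᵀ * Y + Yᵀ * F) a b) 0 := by
    simp only [center_add_smul, Matrix.sub_apply]
    exact (hasDerivAt_transpose_mul_self_add_smul Y F a b).sub_const _
  have hpairing : trace (Fᵀ * (Y * S)) = (Y * S) i j := by
    rw [trace_transpose_center_mul _ _ hYS, transpose_single, trace_single_mul, one_smul]
  have hderiv := (((hasDerivAt_frob_sq hcurve).fun_neg).div_const (4 * σ ^ 2)).add_const C
  simp only [zero_smul, add_zero] at hderiv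
  simp only [matGrad, of_apply]
  rw [hderiv.deriv, trace_transpose_mul_add_of_symm hS, hpairing]
  have hrhs : Y * Yᵀ * Y - Y * (center X)ᵀ * center X = Y * S := by
    simp only [S, Matrix.mul_sub, Matrix.mul_assoc]
  rw [Matrix.smul_apply, hrhs, smul_eq_mul]
  ring

theorem stmt6 {N : ℕ} (σ : ℝ) (hσ : 0 < σ) (C : ℝ) (Xt X : Matrix (Fin 3) (Fin N) ℝ) :
    matGrad (fun Z => -(frob ((center Z)ᵀ * center Z - (center X)ᵀ * center X)) ^ 2
        / (4 * σ ^ 2) + C) Xt =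
      -(1 / σ ^ 2) • ((center Xt * (center Xt)ᵀ) * center Xt
        - (center Xt * (center X)ᵀ) * center X) :=
  stmt6_general σ C Xt X
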